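/- arXiv:1212.5398 — 5 statements merged into one kernel-verified Lean document; each statement's English description precedes it below -/
import Mathlib

section
/- If two functions f, g : X → ℝ are weakly ε-interleaved, then they are strongly 3ε-interleaved. -/
/-!
Every interval `[b, b + 2ε)` contains a point `a + 2nε` of the grid along which `f` and `g`
interleave, so `X_f(b) ⊆ X_f(a + 2nε) ⊆ X_g(a + (2n+1)ε) ⊆ X_g(b + 3ε)`. Shifting the grid by `ε`
swaps the roles of `f` and `g`, which gives `X_g(b) ⊆ X_f(b + 3ε)`; applying both inclusions
at `b` and at `b + 3ε` yields all four strong-interleaving inclusions for `3ε`.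
-/

/-- Sublevel set of a real-valued function. -/
def sublevel {X : Type*} (f : X → ℝ) (a : ℝ) : Set X := f ⁻¹' (Set.Iic a)

/-- Strong `ε`-interleaving of sublevel set filtrations. -/
def StronglyInterleaved {X : Type*} (f g : X → ℝ) (ε : ℝ) : Prop :=
  ∀ a : ℝ,
    sublevel f a ⊆ sublevel g (a + ε) ∧ sublevel g (a + ε) ⊆ sublevel f (a + 2 * ε) ∧
    sublevel g a ⊆ sublevel f (a + ε) ∧ sublevel f (a + ε) ⊆ sublevel g (a + 2 * ε)

/-- Weak `ε`-interleaving: the interleaving inclusions hold along the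
arithmetic progression determined by some `a ∈ ℝ`. -/
def WeaklyInterleaved {X : Type*} (f g : X → ℝ) (ε : ℝ) : Prop :=
  ∃ a : ℝ, ∀ n : ℤ,
    sublevel f (a + 2 * n * ε) ⊆ sublevel g (a + (2 * n + 1) * ε) ∧
    sublevel g (a + (2 * n + 1) * ε) ⊆ sublevel f (a + 2 * (n + 1) * ε)

section

variable {X : Type*} {f g : X → ℝ} {ε : ℝ}

theorem sublevel_mono (f : X → ℝ) : Monotone (sublevel f) :=
  fun _ _ hab => Set.preimage_mono (Set.Iic_subset_Iic.mpr hab)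

theorem exists_grid_mem_Ico (hε : 0 < ε) (a b : ℝ) :
    ∃ n : ℤ, b ≤ a + 2 * n * ε ∧ a + 2 * n * ε < b + 2 * ε := by
  obtain ⟨n, ⟨hle, hlt⟩, -⟩ := existsUnique_add_zsmul_mem_Ico (by positivity : 0 < 2 * ε) a b
  rw [zsmul_eq_mul] at hle hlt
  exact ⟨n, by linarith, by linarith⟩

theorem WeaklyInterleaved.symm (h : WeaklyInterleaved f g ε) : WeaklyInterleaved g f ε := by
  obtain ⟨a, ha⟩ := h
  refine ⟨a + ε, fun n => ⟨?_, ?_⟩⟩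
  · convert (ha n).2 using 2 <;> ring
  · convert (ha (n + 1)).1 using 2 <;> push_cast <;> ring

theorem WeaklyInterleaved.sublevel_subset (hε : 0 < ε) (h : WeaklyInterleaved f g ε) (b : ℝ) :
    sublevel f b ⊆ sublevel g (b + 3 * ε) := by
  obtain ⟨a, ha⟩ := h
  obtain ⟨n, hbn, hnb⟩ := exists_grid_mem_Ico hε a b
  calc sublevel f b ⊆ sublevel f (a + 2 * n * ε) := sublevel_mono f hbn
    _ ⊆ sublevel g (a + (2 * n + 1) * ε) := (ha n).1
    _ ⊆ sublevel g (b + 3 * ε) := sublevel_mono g (by linarith)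

theorem StronglyInterleaved.of_sublevel_subset {δ : ℝ}
    (hfg : ∀ b, sublevel f b ⊆ sublevel g (b + δ)) (hgf : ∀ b, sublevel g b ⊆ sublevel f (b + δ)) :
    StronglyInterleaved f g δ := by
  intro b
  have hδ : b + δ + δ = b + 2 * δ := by ring
  exact ⟨hfg b, hδ ▸ hgf (b + δ), hgf b, hδ ▸ hfg (b + δ)⟩

end

/-- Weakly `ε`-interleaved functions are strongly `3ε`-interleaved. -/
theorem stronglyInterleaved_of_weaklyInterleaved
    {X : Type*} (f g : X → ℝ) (ε : ℝ) (hε : 0 < ε)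
    (h : WeaklyInterleaved f g ε) : StronglyInterleaved f g (3 * ε) :=
  .of_sublevel_subset (h.sublevel_subset hε) (h.symm.sublevel_subset hε)
end

section
/- An interval module over (ℝ, ≤) is indecomposable: the interval module I_J for a nonempty interval J cannot be written as a direct sum of two nonzero persistence submodules. -/
open CategoryTheory CategoryTheory.Limits

/-- `M` is an interval module for the interval `J ⊆ P`: one-dimensional on `J`
with identity (isomorphism) structure maps inside `J`, and zero outside. -/
def IsIntervalModule (k : Type) [Field k] {P : Type} [Preorder P]
    (J : Set P) (M : P ⥤ ModuleCat k) : Prop :=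
  (∀ x ∈ J, Nonempty (M.obj x ≃ₗ[k] k)) ∧
  (∀ x ∉ J, Subsingleton (M.obj x)) ∧
  (∀ (x y : P) (h : x ≤ y), x ∈ J → y ∈ J →
    Function.Bijective (M.map (homOfLE h))) ∧
  (∀ (x y : P) (h : x ≤ y), (x ∉ J ∨ y ∉ J) → M.map (homOfLE h) = 0)

/-!
If `M ≅ A ⊞ B` with `A` nonzero at `x` and `B` nonzero at `y`, we may assume `x ≤ y`.
Every fibre of an interval module has dimension at most one, so it cannot split into two
nonzero summands: hence `B` vanishes at `x` and `A` vanishes at `y`. The structure map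
`M x → M y` then factors through `A y ⊕ B x = 0`, whereas it is a bijection between
nonzero spaces.
-/

lemma ModuleCat.isZero_or_isZero_of_iso_biprod {k : Type*} [Field k] {V X Y : ModuleCat k}
    (hV : Module.rank k V ≤ 1) (e : V ≅ X ⊞ Y) : IsZero X ∨ IsZero Y := by
  have hrank : Module.rank k X + Module.rank k Y ≤ 1 := by
    rw [← rank_prod', ← (e ≪≫ biprodIsoProd X Y).toLinearEquiv.rank_eq]
    exact hV
  by_contra! h
  simp only [isZero_iff_subsingleton, not_subsingleton_iff_nontrivial] at h
  obtain ⟨hX, hY⟩ := h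
  have h2 : (2 : Cardinal) ≤ Module.rank k X + Module.rank k Y := by
    rw [← one_add_one_eq_two]
    exact add_le_add (Cardinal.one_le_iff_pos.mpr rank_pos)
      (Cardinal.one_le_iff_pos.mpr rank_pos)
  exact absurd (h2.trans hrank) (not_le.mpr Cardinal.one_lt_two)

lemma Functor.map_eq_zero_of_iso_biprod {C D : Type*} [Category C] [Category D] [Preadditive D]
    {M A B : C ⥤ D} [HasBinaryBiproduct A B] (e : M ≅ A ⊞ B) {x y : C} (f : x ⟶ y)
    (hA : A.map f = 0) (hB : B.map f = 0) : M.map f = 0 := by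
  have hAB : (A ⊞ B).map f = 0 := by
    have htotal := NatTrans.congr_app (biprod.total (X := A) (Y := B)) x
    simp only [NatTrans.app_add, NatTrans.comp_app, NatTrans.id_app] at htotal
    rw [← Category.id_comp ((A ⊞ B).map f), ← htotal, Preadditive.add_comp, Category.assoc,
      Category.assoc, ← NatTrans.naturality, ← NatTrans.naturality, hA, hB]
    simp only [zero_comp, comp_zero, add_zero]
  rw [← NatIso.naturality_2 e f, hAB, zero_comp, comp_zero]

namespace IsIntervalModule

variable {k : Type} [Field k] {P : Type} [Preorder P] {J : Set P} {M : P ⥤ ModuleCat k}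

lemma rank_obj_le_one (hM : IsIntervalModule k J M) (z : P) : Module.rank k (M.obj z) ≤ 1 := by
  by_cases hz : z ∈ J
  · obtain ⟨e⟩ := hM.1 z hz
    simpa using e.lift_rank_eq.le
  · have := hM.2.1 z hz
    rw [rank_subsingleton']
    exact zero_le_one

lemma mem_of_not_isZero (hM : IsIntervalModule k J M) {z : P} (hz : ¬ IsZero (M.obj z)) :
    z ∈ J := by
  by_contra hzJ
  have := hM.2.1 z hzJ
  exact hz (ModuleCat.isZero_of_subsingleton _)

lemma map_ne_zero (hM : IsIntervalModule k J M) {x y : P} (hxy : x ≤ y)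
    (hx : ¬ IsZero (M.obj x)) (hy : ¬ IsZero (M.obj y)) : M.map (homOfLE hxy) ≠ 0 := by
  intro hzero
  have hsurj := (hM.2.2.1 x y hxy (hM.mem_of_not_isZero hx) (hM.mem_of_not_isZero hy)).2
  have : Subsingleton (M.obj y) := ⟨fun a b => by
    obtain ⟨a, rfl⟩ := hsurj a
    obtain ⟨b, rfl⟩ := hsurj b
    simp [hzero]⟩
  exact hy (ModuleCat.isZero_of_subsingleton _)

end IsIntervalModule

theorem intervalModule_indecomposable_general (k : Type) [Field k]
    (J : Set ℝ) (M : ℝ ⥤ ModuleCat k)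
    (hM : IsIntervalModule k J M) :
    ¬ ∃ (A B : ℝ ⥤ ModuleCat k),
        ¬ IsZero A ∧ ¬ IsZero B ∧ Nonempty (M ≅ A ⊞ B) := by
  rintro ⟨A, B, hA, hB, ⟨e⟩⟩
  obtain ⟨x, hx⟩ : ∃ x, ¬ IsZero (A.obj x) := by
    by_contra! h
    exact hA (Functor.isZero A h)
  obtain ⟨y, hy⟩ : ∃ y, ¬ IsZero (B.obj y) := by
    by_contra! h
    exact hB (Functor.isZero B h)
  wlog hxy : x ≤ y generalizing A B x y
  · exact this B A hB hA (e ≪≫ biprod.braiding A B) y hy x hx (le_of_not_ge hxy)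
  have fibre (z : ℝ) : M.obj z ≅ A.obj z ⊞ B.obj z :=
    have := preservesBinaryBiproducts_of_preservesBiproducts ((evaluation ℝ (ModuleCat k)).obj z)
    ((evaluation ℝ _).obj z).mapIso e ≪≫ Functor.mapBiprod _ A B
  have hBx : IsZero (B.obj x) :=
    (ModuleCat.isZero_or_isZero_of_iso_biprod (hM.rank_obj_le_one x) (fibre x)).resolve_left hx
  have hAy : IsZero (A.obj y) :=
    (ModuleCat.isZero_or_isZero_of_iso_biprod (hM.rank_obj_le_one y) (fibre y)).resolve_right hy
  refine hM.map_ne_zero hxy ?_ ?_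
    (Functor.map_eq_zero_of_iso_biprod e _ (hAy.eq_of_tgt _ _) (hBx.eq_of_src _ _))
  · exact fun h => hx ((biprod_isZero_iff _ _).mp (h.of_iso (fibre x).symm)).1
  · exact fun h => hy ((biprod_isZero_iff _ _).mp (h.of_iso (fibre y).symm)).2

/-- An interval module over `(ℝ, ≤)` is indecomposable: it is not isomorphic to
the direct sum of two nonzero persistence modules. -/
theorem intervalModule_indecomposable (k : Type) [Field k]
    (J : Set ℝ) (hJ : J.Nonempty) (M : ℝ ⥤ ModuleCat k)
    (hM : IsIntervalModule k J M) :
    ¬ ∃ (A B : ℝ ⥤ ModuleCat k),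
        ¬ IsZero A ∧ ¬ IsZero B ∧ Nonempty (M ≅ A ⊞ B) :=
  intervalModule_indecomposable_general k J M hM
end

section
/- The endomorphism ring of an interval module I_J over (ℝ, ≤) is isomorphic to the field k; in particular it is local. -/
set_option synthInstance.maxHeartbeats 1000000

open CategoryTheory

/-!
An endomorphism `η` of `M` acts on each one-dimensional component `M x`, `x ∈ J`, by a scalar.
Any two points of `J` are comparable, and the structure map between them is injective, so
naturality forces these scalars to agree; outside `J` the components vanish. Hence
`c ↦ c • 𝟙 M` is a bijective ring map `k → End M`, and a ring isomorphic to a field is local.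
-/

variable {k : Type} [Field k]

theorem ModuleCat.exists_eq_smul_id_of_linearEquiv {V : ModuleCat k} (e : V ≃ₗ[k] k)
    (f : V ⟶ V) : ∃ c : k, f = c • 𝟙 V := by
  have : Module.Free k V := Module.Free.of_equiv e.symm
  obtain ⟨c, hc, -⟩ := f.hom.existsUnique_eq_smul_id_of_finrank_eq_one
    (e.finrank_eq.trans (Module.finrank_self k))
  exact ⟨c, ModuleCat.hom_ext hc⟩

theorem CategoryTheory.NatTrans.smul_eq_of_map_injective {C : Type*} [Category C]
    {M : C ⥤ ModuleCat k} (η : M ⟶ M) {x y : C} (φ : x ⟶ y) [Nontrivial (M.obj x)]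
    (hφ : Function.Injective (M.map φ)) {a b : k}
    (ha : η.app x = a • 𝟙 _) (hb : η.app y = b • 𝟙 _) : a = b := by
  obtain ⟨v, hv⟩ := exists_ne (0 : M.obj x)
  have hnat := congr($(η.naturality φ) v)
  have hφv : M.map φ v ≠ 0 := fun h0 => hv (hφ (h0.trans (map_zero _).symm))
  simp only [ha, hb] at hnat
  exact smul_left_injective k hφv (by simpa using hnat.symm)

section Preorder

variable {P : Type} [Preorder P] {J : Set P} {M : P ⥤ ModuleCat k}

theorem IsIntervalModule.nontrivial (hM : IsIntervalModule k J M) {x : P} (hx : x ∈ J) :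
    Nontrivial (M.obj x) :=
  let ⟨e⟩ := hM.1 x hx; e.toEquiv.nontrivial

end Preorder

section LinearOrder

variable {P : Type} [LinearOrder P] {J : Set P} {M : P ⥤ ModuleCat k}

theorem IsIntervalModule.eq_smul_id (hM : IsIntervalModule k J M) {x₀ : P}
    (hx₀ : x₀ ∈ J) (η : End M) {c : k} (hc : η.app x₀ = c • 𝟙 _) : η = c • 𝟙 M := by
  refine NatTrans.ext (funext fun x => ?_)
  by_cases hx : x ∈ J
  · obtain ⟨e⟩ := hM.1 x hx
    obtain ⟨d, hd⟩ := ModuleCat.exists_eq_smul_id_of_linearEquiv e (η.app x)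
    have hdc : d = c := by
      have := hM.nontrivial hx
      have := hM.nontrivial hx₀
      rcases le_total x x₀ with h | h
      · exact η.smul_eq_of_map_injective (homOfLE h) (hM.2.2.1 x x₀ h hx hx₀).1 hd hc
      · exact (η.smul_eq_of_map_injective (homOfLE h) (hM.2.2.1 x₀ x h hx₀ hx).1 hc hd).symm
    rw [hd, hdc, NatTrans.app_smul, NatTrans.id_app]
  · have := hM.2.1 x hx
    ext v
    exact Subsingleton.elim _ _

theorem IsIntervalModule.nontrivial_end (hM : IsIntervalModule k J M) (hJ : J.Nonempty) :
    Nontrivial (End M) := by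
  obtain ⟨x₀, hx₀⟩ := hJ
  have := hM.nontrivial hx₀
  obtain ⟨v, hv⟩ := exists_ne (0 : M.obj x₀)
  refine nontrivial_of_ne (𝟙 M) 0 fun h => hv ?_
  simpa using congr(($h).app x₀ v)

theorem IsIntervalModule.bijective_algebraMap (hM : IsIntervalModule k J M) (hJ : J.Nonempty) :
    Function.Bijective (algebraMap k (End M)) := by
  have := hM.nontrivial_end hJ
  refine ⟨(algebraMap k (End M)).injective, fun η => ?_⟩
  obtain ⟨x₀, hx₀⟩ := hJ
  obtain ⟨e⟩ := hM.1 x₀ hx₀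
  obtain ⟨c, hc⟩ := ModuleCat.exists_eq_smul_id_of_linearEquiv e (η.app x₀)
  exact ⟨c, (hM.eq_smul_id hx₀ η hc).symm⟩

end LinearOrder

/-- The endomorphism ring of an interval module over `(ℝ, ≤)` is isomorphic to
the base field `k`; in particular it is a local ring. -/
theorem intervalModule_end_ring (k : Type) [Field k]
    (J : Set ℝ) (hJ : J.Nonempty) (M : ℝ ⥤ ModuleCat k)
    (hM : IsIntervalModule k J M) :
    Nonempty (End M ≃+* k) ∧ IsLocalRing (End M) := by
  let e : k ≃+* End M := RingEquiv.ofBijective _ (hM.bijective_algebraMap hJ)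
  exact ⟨⟨e.symm⟩, e.isLocalRing⟩
end

section
/- Every finitely generated graded module over the polynomial ring k[t] (k a field, t in degree 1) decomposes as a direct sum of finitely many graded cyclic modules, each isomorphic to a shift of k[t] or to a shift of k[t]/(t^d) for some d ≥ 1. -/
set_option synthInstance.maxHeartbeats 1000000

open CategoryTheory CategoryTheory.Limits

attribute [local instance] CategoryTheory.Limits.HasFiniteBiproducts.of_hasFiniteProducts

/-- A graded `k[t]`-module, viewed as a functor `ℕ ⥤ Vect_k` (the structure map
`M_i → M_{i+1}` is multiplication by `t`), is finitely generated if finitely many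
homogeneous elements generate every graded piece under the `t`-action and
`k`-linear combinations. -/
def IsFinitelyGeneratedGraded (k : Type) [Field k] (M : ℕ ⥤ ModuleCat k) : Prop :=
  ∃ (ι : Type) (_ : Finite ι) (deg : ι → ℕ) (gen : ∀ i, M.obj (deg i)),
    ∀ (n : ℕ) (x : M.obj n),
      x ∈ Submodule.span k
        {y : M.obj n | ∃ (i : ι) (h : deg i ≤ n), M.map (homOfLE h) (gen i) = y}


/-!
Finite generation makes every graded piece finite-dimensional and the structure maps surjective
from the top generator degree on; dimensions then stabilise, so the maps are eventually bijective,
say from degree `N`. For such a module take a nonzero `x` in the lowest nonzero degree `a`. The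
images of `x` span a graded submodule that is an interval module on `[a, b)` or `[a, ∞)`, and it is
a direct summand: pick a complement `C` of the line through the image of `x` in one degree `T`,
either the last degree before `x` dies or a degree past `N`, pull `C` back along the structure
maps below `T`, and above `T` push it forward (or take everything, once `x` is dead). The pulled
back family stays complementary because the image of `x` in degree `n ≥ a` maps to the one in
degree `T`, and below `a` because the module vanishes there. The complement has smaller total
dimension in degrees `≤ N`, and induction finishes the proof.
-/

attribute [local instance] hasBinaryBiproducts_of_finite_biproducts

namespace CategoryTheory.Limits

variable {C : Type*} [Category C] [Preadditive C] [HasFiniteBiproducts C]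

noncomputable def finSuccBinaryBicone {n : ℕ} (f : Fin (n + 1) → C) :
    BinaryBicone (f 0) (⨁ fun i : Fin n => f i.succ) where
  pt := ⨁ f
  fst := biproduct.π f 0
  snd := biproduct.lift fun i : Fin n => biproduct.π f i.succ
  inl := biproduct.ι f 0
  inr := biproduct.desc fun i : Fin n => biproduct.ι f i.succ
  inl_fst := biproduct.ι_π_self f 0
  inl_snd := by
    ext i
    rw [Category.assoc, biproduct.lift_π, biproduct.ι_π_ne _ (Fin.succ_ne_zero i).symm,
      zero_comp]
  inr_fst := by
    ext i
    rw [biproduct.ι_desc_assoc, biproduct.ι_π_ne _ (Fin.succ_ne_zero i), comp_zero]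
  inr_snd := by
    ext i j
    rw [Category.assoc, biproduct.ι_desc_assoc, biproduct.lift_π, Category.id_comp]
    by_cases h : j = i
    · subst h
      rw [biproduct.ι_π_self, biproduct.ι_π_self]
    · rw [biproduct.ι_π_ne _ h, biproduct.ι_π_ne _ ((Fin.succ_injective _).ne h)]

noncomputable def biproductFinSuccIso {n : ℕ} (f : Fin (n + 1) → C) :
    ⨁ f ≅ f 0 ⊞ ⨁ fun i : Fin n => f i.succ :=
  biprod.uniqueUpToIso _ _ (isBinaryBilimitOfTotal (finSuccBinaryBicone f) (by
    simp only [finSuccBinaryBicone, biproduct.lift_desc]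
    rw [← biproduct.total, Fin.sum_univ_succ]
    rfl))

end CategoryTheory.Limits

lemma Set.OrdConnected.eq_Ici_or_eq_Ico_of_isLeast {S : Set ℕ} {a : ℕ} (hS : S.OrdConnected)
    (ha : IsLeast S a) : S = Set.Ici a ∨ ∃ d, 1 ≤ d ∧ S = Set.Ico a (a + d) := by
  classical
  by_cases hall : ∀ n, a ≤ n → n ∈ S
  · exact Or.inl (Set.Subset.antisymm ha.2 hall)
  push Not at hall
  obtain ⟨hab, hb⟩ := Nat.find_spec hall
  have hlt : a < Nat.find hall := lt_of_le_of_ne hab fun h => hb (h ▸ ha.1)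
  refine Or.inr ⟨Nat.find hall - a, by omega, Set.Subset.antisymm (fun n hn => ?_) fun n hn => ?_⟩
  · exact ⟨ha.2 hn, lt_of_not_ge fun h => hb (hS.out ha.1 hn ⟨hab, by omega⟩)⟩
  · by_contra hnS
    have := Nat.find_min' hall ⟨hn.1, hnS⟩
    have := hn.2
    omega

lemma Submodule.isCompl_of_subsingleton {R V : Type*} [Semiring R] [AddCommMonoid V] [Module R V]
    [Subsingleton V] (S T : Submodule R V) : IsCompl S T := by
  rw [Subsingleton.elim S ⊥, Subsingleton.elim T ⊤]
  exact isCompl_bot_top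

lemma LinearMap.bijective_restrict_of_isCompl {R V W : Type*} [Ring R] [AddCommGroup V]
    [Module R V] [AddCommGroup W] [Module R W] {f : V →ₗ[R] W} (hf : Function.Bijective f)
    {S T : Submodule R V} {S' T' : Submodule R W} (hST : IsCompl S T) (hST' : IsCompl S' T')
    (hS : ∀ v ∈ S, f v ∈ S') (hT : ∀ v ∈ T, f v ∈ T') : Function.Bijective (f.restrict hS) := by
  refine ⟨fun u v huv => Subtype.ext (hf.1 (congrArg Subtype.val huv)), fun w => ?_⟩
  obtain ⟨v, hv⟩ := hf.2 w
  obtain ⟨s, hs, t, ht, rfl⟩ :=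
    Submodule.mem_sup.mp (hST.codisjoint.eq_top ▸ Submodule.mem_top (x := v))
  -- the image of the `T`-component lies in `S' ⊓ T' = ⊥`
  have hzero : f t = 0 := by
    refine Submodule.disjoint_def.mp hST'.disjoint _ ?_ (hT t ht)
    have : f t = w - f s := by rw [← hv, map_add]; abel
    exact this ▸ S'.sub_mem w.2 (hS s hs)
  exact ⟨⟨s, hs⟩, Subtype.ext (by rw [LinearMap.restrict_apply, ← hv, map_add, hzero, add_zero])⟩

section LinearAlgebra

variable {K V W : Type*} [Field K] [AddCommGroup V] [Module K V] [AddCommGroup W] [Module K W]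

lemma Submodule.isCompl_span_singleton_comap (f : V →ₗ[K] W) {v : V} (hv : f v ≠ 0)
    {C : Submodule K W} (hC : IsCompl (K ∙ f v) C) : IsCompl (K ∙ v) (C.comap f) := by
  refine ⟨disjoint_def.mpr fun u hu huC => ?_, codisjoint_iff.mpr (eq_top_iff'.mpr fun u => ?_)⟩
  · obtain ⟨c, rfl⟩ := mem_span_singleton.mp hu
    have hcf : c • f v = 0 := disjoint_def.mp hC.disjoint _
      (smul_mem _ _ (mem_span_singleton_self _)) (by simpa using huC)
    simp [(smul_eq_zero.mp hcf).resolve_right hv]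
  · obtain ⟨y, hy, w, hw, hyw⟩ := mem_sup.mp (hC.codisjoint.eq_top ▸ mem_top (x := f u))
    obtain ⟨c, rfl⟩ := mem_span_singleton.mp hy
    refine mem_sup.mpr ⟨c • v, smul_mem _ _ (mem_span_singleton_self _), u - c • v, ?_,
      add_sub_cancel _ _⟩
    rw [mem_comap, map_sub, map_smul, ← hyw, add_sub_cancel_left]
    exact hw

lemma LinearMap.bijective_restrict_span_singleton (f : V →ₗ[K] W) {v : V} {w : W} (hv : f v = w)
    (hw : w ≠ 0) (h : ∀ u ∈ K ∙ v, f u ∈ K ∙ w) : Function.Bijective (f.restrict h) := by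
  refine ⟨fun u u' huu' => ?_, fun y => ?_⟩
  · obtain ⟨c, hc⟩ := Submodule.mem_span_singleton.mp u.2
    obtain ⟨c', hc'⟩ := Submodule.mem_span_singleton.mp u'.2
    have : f u = f u' := congrArg Subtype.val huu'
    rw [← hc, ← hc', map_smul, map_smul, hv] at this
    exact Subtype.ext (by rw [← hc, ← hc', smul_left_injective K hw this])
  · obtain ⟨c, hc⟩ := Submodule.mem_span_singleton.mp y.2
    exact ⟨⟨c • v, Submodule.smul_mem _ _ (Submodule.mem_span_singleton_self _)⟩,
      Subtype.ext (show f (c • v) = y by rw [map_smul, hv, hc])⟩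

end LinearAlgebra

namespace PersistenceModule

variable {k : Type} [Field k]

def structureMap (M : ℕ ⥤ ModuleCat k) {n m : ℕ} (h : n ≤ m) : M.obj n →ₗ[k] M.obj m :=
  (M.map (homOfLE h)).hom

def IsShiftedCyclic (M : ℕ ⥤ ModuleCat k) : Prop :=
  (∃ a, IsIntervalModule k (Set.Ici a) M) ∨
    ∃ a d, 1 ≤ d ∧ IsIntervalModule k (Set.Ico a (a + d)) M

variable {M : ℕ ⥤ ModuleCat k}

@[simp]
lemma structureMap_self {n : ℕ} (h : n ≤ n) (v : M.obj n) : structureMap M h v = v := by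
  simp [structureMap]

lemma structureMap_structureMap {n m l : ℕ} (h₁ : n ≤ m) (h₂ : m ≤ l) (v : M.obj n) :
    structureMap M h₂ (structureMap M h₁ v) = structureMap M (h₁.trans h₂) v := by
  rw [structureMap, structureMap, structureMap, ← homOfLE_comp h₁ h₂, M.map_comp]
  rfl

lemma bijective_structureMap {N : ℕ}
    (hbij : ∀ n, N ≤ n → Function.Bijective (structureMap M n.le_succ)) {n m : ℕ}
    (hn : N ≤ n) (h : n ≤ m) : Function.Bijective (structureMap M h) := by
  induction m, h using Nat.le_induction with
  | base => exact ⟨fun u v huv => by simpa using huv, fun v => ⟨v, by simp⟩⟩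
  | succ m hnm ih =>
    have hcomp : ⇑(structureMap M (hnm.trans m.le_succ)) =
        structureMap M m.le_succ ∘ structureMap M hnm :=
      funext fun v => (structureMap_structureMap hnm m.le_succ v).symm
    exact hcomp ▸ (hbij m (hn.trans hnm)).comp ih

section subfunctor

def IsStable (S : ∀ n, Submodule k (M.obj n)) : Prop :=
  ∀ ⦃n m : ℕ⦄ (h : n ≤ m), ∀ v ∈ S n, structureMap M h v ∈ S m

lemma IsStable.of_succ {S : ∀ n, Submodule k (M.obj n)}
    (hS : ∀ n, ∀ v ∈ S n, structureMap M n.le_succ v ∈ S (n + 1)) : IsStable S := by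
  intro n m h
  induction m, h using Nat.le_induction with
  | base => intro v hv; simpa using hv
  | succ m hnm ih =>
    intro v hv
    simpa [structureMap_structureMap] using hS m _ (ih v hv)

variable (M) in
def subfunctor (S : ∀ n, Submodule k (M.obj n)) (hS : IsStable S) : ℕ ⥤ ModuleCat k where
  obj n := ModuleCat.of k (S n)
  map {n m} g := ModuleCat.ofHom ((structureMap M (leOfHom g)).restrict (hS (leOfHom g)))
  map_id n := by ext v; exact structureMap_self _ _
  map_comp g g' := by ext v; exact (structureMap_structureMap _ _ _).symm

variable {S T : ∀ n, Submodule k (M.obj n)} (hS : IsStable S) (hT : IsStable T)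

def subfunctorι : subfunctor M S hS ⟶ M where
  app n := ModuleCat.ofHom (S n).subtype

noncomputable def subfunctorProj (hc : ∀ n, IsCompl (S n) (T n)) : M ⟶ subfunctor M S hS where
  app n := ModuleCat.ofHom ((S n).projectionOnto (T n) (hc n))
  naturality {n m} g := by
    ext v
    apply Subtype.ext
    change (S m).projection (T m) (hc m) (structureMap M (leOfHom g) v) =
      structureMap M (leOfHom g) ((S n).projection (T n) (hc n) v)
    conv_lhs => rw [← Submodule.projection_add_projection_eq_self (hc n) v, map_add]
    rw [map_add, Submodule.projection_apply_of_mem_left (hc m) (hS _ _ (by simp)),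
      Submodule.projection_apply_of_mem_right (hc m) (hT _ _ (by simp)), add_zero]

noncomputable def isoBiprodOfIsCompl (hc : ∀ n, IsCompl (S n) (T n)) :
    M ≅ subfunctor M S hS ⊞ subfunctor M T hT :=
  biprod.uniqueUpToIso _ _ (b := {
      pt := M
      fst := subfunctorProj hS hT hc
      snd := subfunctorProj hT hS fun n => (hc n).symm
      inl := subfunctorι hS
      inr := subfunctorι hT
      inl_fst := by ext n v; exact Submodule.projectionOnto_apply_left (hc n) v
      inl_snd := by ext n v; exact Submodule.projectionOnto_apply_right (hc n).symm v
      inr_fst := by ext n v; exact Submodule.projectionOnto_apply_right (hc n) v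
      inr_snd := by ext n v; exact Submodule.projectionOnto_apply_left (hc n).symm v })
    (isBinaryBilimitOfTotal _ (by
      ext n v
      exact Submodule.projection_add_projection_eq_self (hc n) v))

end subfunctor

lemma isStable_span {g : ∀ n, M.obj n}
    (hg : ∀ ⦃n m⦄ (h : n ≤ m), g n ≠ 0 → structureMap M h (g n) = g m) :
    IsStable fun n => k ∙ g n := by
  intro n m h v hv
  obtain ⟨c, rfl⟩ := Submodule.mem_span_singleton.mp hv
  by_cases hgn : g n = 0
  · simp [hgn]
  · simp [hg h hgn, Submodule.smul_mem _ _ (Submodule.mem_span_singleton_self _)]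

lemma isIntervalModule_subfunctor_span {g : ∀ n, M.obj n}
    (hg : ∀ ⦃n m⦄ (h : n ≤ m), g n ≠ 0 → structureMap M h (g n) = g m) :
    IsIntervalModule k {n | g n ≠ 0} (subfunctor M _ (isStable_span hg)) := by
  have hzero : ∀ n, g n = 0 → Subsingleton (k ∙ g n) := fun n hn => by
    rw [hn, Submodule.span_zero_singleton]
    infer_instance
  refine ⟨fun n hn => ⟨(LinearEquiv.toSpanNonzeroSingleton k _ (g n) hn).symm⟩,
    fun n hn => hzero n (not_not.mp hn),
    fun n m h hn hm => (structureMap M h).bijective_restrict_span_singleton (hg h hn) hm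
      (isStable_span hg h),
    fun n m h hnm => ModuleCat.hom_ext (LinearMap.ext fun v => ?_)⟩
  rcases hnm with hn | hm
  · have := hzero n (not_not.mp hn)
    obtain rfl : v = 0 := Subsingleton.elim (α := k ∙ g n) _ _
    exact map_zero _
  · exact @Subsingleton.elim _ (hzero m (not_not.mp hm)) _ _

section propagate

variable {a : ℕ} (x : M.obj a)

noncomputable def propagate (n : ℕ) : M.obj n :=
  if h : a ≤ n then structureMap M h x else 0

lemma propagate_of_le {n : ℕ} (h : a ≤ n) : propagate x n = structureMap M h x := dif_pos h

lemma propagate_self : propagate x a = x := by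
  rw [propagate_of_le x le_rfl, structureMap_self]

lemma le_of_propagate_ne_zero {n : ℕ} (hx : propagate x n ≠ 0) : a ≤ n :=
  not_lt.mp fun han => hx (dif_neg (by omega))

lemma structureMap_propagate {n m : ℕ} (ha : a ≤ n) (h : n ≤ m) :
    structureMap M h (propagate x n) = propagate x m := by
  rw [propagate_of_le x ha, propagate_of_le x (ha.trans h), structureMap_structureMap]

lemma structureMap_propagate_of_ne_zero ⦃n m : ℕ⦄ (h : n ≤ m) (hx : propagate x n ≠ 0) :
    structureMap M h (propagate x n) = propagate x m :=
  structureMap_propagate x (le_of_propagate_ne_zero x hx) h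

lemma propagate_eq_zero_of_le {n m : ℕ} (ha : a ≤ n) (h : n ≤ m) (h0 : propagate x n = 0) :
    propagate x m = 0 := by
  rw [← structureMap_propagate x ha h, h0, map_zero]

lemma isShiftedCyclic_subfunctor_span_propagate (hx : x ≠ 0) :
    IsShiftedCyclic (subfunctor M _ (isStable_span (structureMap_propagate_of_ne_zero x))) := by
  have hconn : Set.OrdConnected {n | propagate x n ≠ 0} :=
    ⟨fun m hm _ hn l hl h0 =>
      hn (propagate_eq_zero_of_le x ((le_of_propagate_ne_zero x hm).trans hl.1) hl.2 h0)⟩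
  have hint := isIntervalModule_subfunctor_span (structureMap_propagate_of_ne_zero x)
  rcases hconn.eq_Ici_or_eq_Ico_of_isLeast
      ⟨by simpa [propagate_self] using hx, fun n hn => le_of_propagate_ne_zero x hn⟩ with
    h | ⟨d, hd, h⟩
  · exact Or.inl ⟨a, h ▸ hint⟩
  · exact Or.inr ⟨a, d, hd, h ▸ hint⟩

end propagate

section complement

variable {a : ℕ} {x : M.obj a}

lemma isCompl_span_propagate_comap (hmin : ∀ n < a, Subsingleton (M.obj n)) {T : ℕ}
    (hxT : propagate x T ≠ 0) {C : Submodule k (M.obj T)} (hC : IsCompl (k ∙ propagate x T) C)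
    {n : ℕ} (h : n ≤ T) : IsCompl (k ∙ propagate x n) (C.comap (structureMap M h)) := by
  rcases lt_or_ge n a with han | han
  · have := hmin n han
    exact Submodule.isCompl_of_subsingleton _ _
  · rw [← structureMap_propagate x han h] at hxT hC
    exact Submodule.isCompl_span_singleton_comap _ hxT hC

lemma exists_isStable_isCompl_of_propagate_succ_eq_zero (hmin : ∀ n < a, Subsingleton (M.obj n))
    {T : ℕ} (hxT : propagate x T ≠ 0) (hxT' : propagate x (T + 1) = 0) :
    ∃ W : ∀ n, Submodule k (M.obj n), IsStable W ∧ ∀ n, IsCompl (k ∙ propagate x n) (W n) := by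
  obtain ⟨C, hC⟩ := Submodule.exists_isCompl (k ∙ propagate x T)
  refine ⟨fun n => if h : n ≤ T then C.comap (structureMap M h) else ⊤,
    IsStable.of_succ fun n v hv => ?_, fun n => ?_⟩
  · by_cases hn : n + 1 ≤ T
    · simp only [dif_pos hn, dif_pos (Nat.le_of_succ_le hn)] at hv ⊢
      rwa [Submodule.mem_comap, structureMap_structureMap]
    · simp only [dif_neg hn, Submodule.mem_top]
  · by_cases hn : n ≤ T
    · simpa only [dif_pos hn] using isCompl_span_propagate_comap hmin hxT hC hn
    · have h0 : propagate x n = 0 :=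
        propagate_eq_zero_of_le x ((le_of_propagate_ne_zero x hxT).trans T.le_succ) (by omega) hxT'
      simpa only [dif_neg hn, h0, Submodule.span_zero_singleton] using isCompl_bot_top

lemma exists_isStable_isCompl_of_bijective (hmin : ∀ n < a, Subsingleton (M.obj n)) {T : ℕ}
    (hxT : propagate x T ≠ 0) (hbij : ∀ n, T ≤ n → Function.Bijective (structureMap M n.le_succ)) :
    ∃ W : ∀ n, Submodule k (M.obj n), IsStable W ∧ ∀ n, IsCompl (k ∙ propagate x n) (W n) := by
  obtain ⟨C, hC⟩ := Submodule.exists_isCompl (k ∙ propagate x T)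
  refine ⟨fun n => if h : n ≤ T then C.comap (structureMap M h)
      else C.map (structureMap M (le_of_not_ge h)), IsStable.of_succ fun n v hv => ?_, fun n => ?_⟩
  · by_cases hn : n + 1 ≤ T
    · simp only [dif_pos hn, dif_pos (Nat.le_of_succ_le hn)] at hv ⊢
      rwa [Submodule.mem_comap, structureMap_structureMap]
    · simp only [dif_neg hn]
      by_cases hnT : n ≤ T
      · obtain rfl : n = T := by omega
        simp only [dif_pos hnT, Submodule.mem_comap, structureMap_self] at hv
        exact Submodule.mem_map_of_mem hv
      · simp only [dif_neg hnT] at hv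
        obtain ⟨c, hc, rfl⟩ := hv
        exact ⟨c, hc, (structureMap_structureMap _ _ c).symm⟩
  · by_cases hn : n ≤ T
    · simpa only [dif_pos hn] using isCompl_span_propagate_comap hmin hxT hC hn
    · have hTn : T ≤ n := le_of_not_ge hn
      have hspan : k ∙ propagate x n = (k ∙ propagate x T).map (structureMap M hTn) := by
        rw [Submodule.map_span, Set.image_singleton,
          structureMap_propagate x (le_of_propagate_ne_zero x hxT)]
      simp only [dif_neg hn, hspan]
      exact (Submodule.orderIsoMapComapOfBijective _
        (bijective_structureMap hbij le_rfl hTn)).isCompl_iff.mp hC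

lemma exists_isStable_isCompl_span_propagate {N : ℕ}
    (hbij : ∀ n, N ≤ n → Function.Bijective (structureMap M n.le_succ))
    (hmin : ∀ n < a, Subsingleton (M.obj n)) (hx : x ≠ 0) :
    ∃ W : ∀ n, Submodule k (M.obj n), IsStable W ∧ ∀ n, IsCompl (k ∙ propagate x n) (W n) := by
  classical
  by_cases hdies : ∃ m, a ≤ m ∧ propagate x m = 0
  · obtain ⟨ham, hm⟩ := Nat.find_spec hdies
    have hlt : a < Nat.find hdies :=
      ham.lt_of_ne fun h => hx (by rwa [← h, propagate_self] at hm)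
    refine exists_isStable_isCompl_of_propagate_succ_eq_zero hmin (T := Nat.find hdies - 1)
      (fun h0 => Nat.find_min hdies (by omega : Nat.find hdies - 1 < Nat.find hdies)
        ⟨by omega, h0⟩) ?_
    rwa [Nat.sub_add_cancel (by omega)]
  · push Not at hdies
    exact exists_isStable_isCompl_of_bijective hmin (hdies _ (le_max_left a N))
      fun n hn => hbij n ((le_max_right a N).trans hn)

end complement

lemma le_of_ne_zero_of_forall_lt_subsingleton {N a : ℕ}
    (hbij : ∀ n, N ≤ n → Function.Bijective (structureMap M n.le_succ))
    (hmin : ∀ n < a, Subsingleton (M.obj n)) {x : M.obj a} (hx : x ≠ 0) : a ≤ N := by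
  by_contra! hNa
  have := hmin N hNa
  obtain ⟨y, rfl⟩ := (bijective_structureMap hbij le_rfl hNa.le).2 x
  exact hx (by rw [Subsingleton.elim y 0, map_zero])

lemma sum_finrank_lt_of_ne_top [∀ n, FiniteDimensional k (M.obj n)]
    {W : ∀ n, Submodule k (M.obj n)} {N a : ℕ} (haN : a ≤ N) (ha : W a ≠ ⊤) :
    ∑ n ∈ Finset.range (N + 1), Module.finrank k (W n) <
      ∑ n ∈ Finset.range (N + 1), Module.finrank k (M.obj n) :=
  Finset.sum_lt_sum (fun n _ => Submodule.finrank_le _)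
    ⟨a, Finset.mem_range.mpr (by omega), Submodule.finrank_lt ha⟩

theorem exists_iso_biproduct_isShiftedCyclic {N : ℕ} (M : ℕ ⥤ ModuleCat k)
    (hfin : ∀ n, FiniteDimensional k (M.obj n))
    (hbij : ∀ n, N ≤ n → Function.Bijective (structureMap M n.le_succ)) :
    ∃ (r : ℕ) (Ms : Fin r → ℕ ⥤ ModuleCat k), (∀ i, IsShiftedCyclic (Ms i)) ∧
      Nonempty (M ≅ ⨁ Ms) := by
  induction hd : ∑ n ∈ Finset.range (N + 1), Module.finrank k (M.obj n)
    using Nat.strong_induction_on generalizing M with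
  | _ d ih =>
  by_cases hzero : ∀ n, Subsingleton (M.obj n)
  · refine ⟨0, Fin.elim0, fun i => i.elim0, ⟨IsZero.iso ?_ ?_⟩⟩
    · exact Functor.isZero M fun n => @ModuleCat.isZero_of_subsingleton _ _ _ (hzero n)
    · exact (IsZero.iff_id_eq_zero _).mpr (biproduct.hom_ext _ _ fun i => i.elim0)
  push Not at hzero
  classical
  set a := Nat.find hzero
  have hmin : ∀ n < a, Subsingleton (M.obj n) := fun n hn =>
    not_nontrivial_iff_subsingleton.mp (Nat.find_min hzero hn)
  obtain ⟨x, hx⟩ := @exists_ne _ (Nat.find_spec hzero) 0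
  obtain ⟨W, hW, hc⟩ := exists_isStable_isCompl_span_propagate hbij hmin hx
  have hX := isStable_span (structureMap_propagate_of_ne_zero x)
  have hWa : W a ≠ ⊤ := fun htop => hx <| by
    have hca := hc a
    rw [htop] at hca
    simpa [propagate_self] using eq_bot_of_isCompl_top hca
  have hlt : ∑ n ∈ Finset.range (N + 1), Module.finrank k (W n) < d := hd ▸
    sum_finrank_lt_of_ne_top (le_of_ne_zero_of_forall_lt_subsingleton hbij hmin hx) hWa
  obtain ⟨r, Ms, hMs, ⟨e⟩⟩ := ih _ hlt (subfunctor M W hW)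
    (fun n => inferInstanceAs (FiniteDimensional k (W n)))
    (fun n hn => LinearMap.bijective_restrict_of_isCompl (hbij n hn) (hc n).symm
      (hc (n + 1)).symm (hW n.le_succ) (hX n.le_succ)) rfl
  refine ⟨r + 1, Fin.cons (subfunctor M _ hX) Ms,
    Fin.cases (isShiftedCyclic_subfunctor_span_propagate x hx) hMs,
    ⟨isoBiprodOfIsCompl hX hW hc ≪≫ biprod.mapIso (Iso.refl _) e ≪≫
      (biproductFinSuccIso (Fin.cons (subfunctor M _ hX) Ms : Fin (r + 1) → _)).symm⟩⟩

lemma exists_bijective_of_surjective (hfin : ∀ n, FiniteDimensional k (M.obj n)) {N : ℕ}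
    (hsurj : ∀ n, N ≤ n → Function.Surjective (structureMap M n.le_succ)) :
    ∃ N' : ℕ, ∀ n, N' ≤ n → Function.Bijective (structureMap M n.le_succ) := by
  set d : ℕ → ℕ := fun j => Module.finrank k (M.obj (N + j))
  have hanti : Antitone d := antitone_nat_of_succ_le fun j =>
    LinearMap.finrank_le_finrank_of_surjective (hsurj (N + j) (by omega))
  refine ⟨N + Function.argmin d, fun n hn => ?_⟩
  obtain ⟨j, rfl⟩ : ∃ j, n = N + j := ⟨n - N, by omega⟩
  have hsurj' := hsurj (N + j) (by omega)
  have hdj : d j = d (j + 1) :=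
    le_antisymm ((hanti (by omega : Function.argmin d ≤ j)).trans (Function.argmin_le d (j + 1)))
      (hanti j.le_succ)
  exact ⟨(LinearMap.injective_iff_surjective_of_finrank_eq_finrank hdj).mpr hsurj', hsurj'⟩

theorem _root_.IsFinitelyGeneratedGraded.finiteDimensional (hM : IsFinitelyGeneratedGraded k M)
    (n : ℕ) : FiniteDimensional k (M.obj n) := by
  obtain ⟨ι, hι, deg, gen, hgen⟩ := hM
  have hfin : {y : M.obj n | ∃ (i : ι) (h : deg i ≤ n), M.map (homOfLE h) (gen i) = y}.Finite :=
    (Set.finite_range fun p : {i // deg i ≤ n} => M.map (homOfLE p.2) (gen p.1)).subset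
      (by rintro _ ⟨i, hi, rfl⟩; exact ⟨⟨i, hi⟩, rfl⟩)
  exact Module.finite_def.mpr
    ⟨hfin.toFinset, by rw [Set.Finite.coe_toFinset]; exact Submodule.eq_top_iff'.mpr (hgen n)⟩

theorem _root_.IsFinitelyGeneratedGraded.exists_surjective (hM : IsFinitelyGeneratedGraded k M) :
    ∃ N : ℕ, ∀ n, N ≤ n → Function.Surjective (structureMap M n.le_succ) := by
  obtain ⟨ι, hι, deg, gen, hgen⟩ := hM
  obtain ⟨N, hN⟩ := (Set.finite_range deg).bddAbove
  refine ⟨N, fun n hn => LinearMap.range_eq_top.mp (Submodule.eq_top_iff'.mpr fun v => ?_)⟩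
  refine Submodule.span_le.mpr ?_ (hgen (n + 1) v)
  rintro _ ⟨i, hi, rfl⟩
  exact ⟨structureMap M ((hN ⟨i, rfl⟩).trans hn) (gen i), structureMap_structureMap _ _ _⟩

end PersistenceModule

open PersistenceModule in
/-- Structure theorem for finitely generated graded `k[t]`-modules: any such
module is a finite direct sum of graded cyclic modules, each a shift `k[t](−a)`
of the free module (an interval module on `[a, ∞)`) or a shift
`(k[t]/(t^d))(−a)` of a torsion cyclic module (an interval module on
`[a, a+d)`). -/
theorem gradedModule_structure_theorem (k : Type) [Field k]
    (M : ℕ ⥤ ModuleCat k) (hM : IsFinitelyGeneratedGraded k M) :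
    ∃ (n : ℕ) (Ms : Fin n → (ℕ ⥤ ModuleCat k)),
      (∀ i : Fin n,
        (∃ a : ℕ, IsIntervalModule k (Set.Ici a) (Ms i)) ∨
        (∃ (a d : ℕ), 1 ≤ d ∧ IsIntervalModule k (Set.Ico a (a + d)) (Ms i))) ∧
      Nonempty (M ≅ biproduct Ms) := by
  obtain ⟨N, hsurj⟩ := hM.exists_surjective
  obtain ⟨N', hbij⟩ := exists_bijective_of_surjective hM.finiteDimensional hsurj
  exact exists_iso_biproduct_isShiftedCyclic M hM.finiteDimensional hbij
end

section
/- For a persistence module M : (ℝ, ≤) → Vect_k with all structure maps of finite rank, the function μ([a,b]×[c,d]) = r(b,c) − r(a,c) − r(b,d) + r(a,d), where r(x,y) = rank M(x ≤ y) for x ≤ y, is nonnegative whenever a ≤ b ≤ c ≤ d. -/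
/-!
Write `g = M(a ≤ b)`, `φ = M(b ≤ c)`, `ψ = M(c ≤ d)`. By functoriality the four ranks are those of
`φ`, `φ ∘ g`, `ψ ∘ φ` and `ψ ∘ φ ∘ g`, so `μ ≥ 0` is the Frobenius rank inequality
`rank (φ ∘ g) + rank (ψ ∘ φ) ≤ rank φ + rank (ψ ∘ φ ∘ g)`. It holds as soon as `range φ` is
finite-dimensional: the images `p = range (φ ∘ g) ≤ q = range φ` satisfy
`dim ψ(q) - dim ψ(p) ≤ dim q - dim p` by rank–nullity, since `q ⊓ ker ψ ⊇ p ⊓ ker ψ`.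
-/

open CategoryTheory

/-- The rank `r(x,y)` of the structure map `M(x ≤ y)` of a persistence module. -/
noncomputable def persRank (k : Type) [Field k] (M : ℝ ⥤ ModuleCat k)
    {x y : ℝ} (h : x ≤ y) : ℕ :=
  Module.finrank k (LinearMap.range (M.map (homOfLE h)).hom)

open Module

section RankInequalities

variable {K U V W X : Type*} [DivisionRing K] [AddCommGroup U] [Module K U] [AddCommGroup V] [Module K V]
  [AddCommGroup W] [Module K W] [AddCommGroup X] [Module K X]

theorem Submodule.finrank_map_add_finrank_inf_ker (f : V →ₗ[K] W) (p : Submodule K V)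
    [FiniteDimensional K p] :
    finrank K (p.map f) + finrank K (p ⊓ LinearMap.ker f : Submodule K V) = finrank K p := by
  rw [← (f.domRestrict p).finrank_range_add_finrank_ker, LinearMap.range_domRestrict,
    LinearMap.ker_domRestrict, ← Submodule.finrank_map_subtype_eq, Submodule.map_comap_subtype]

theorem Submodule.finrank_add_finrank_map_le_of_le (f : V →ₗ[K] W) {p q : Submodule K V}
    (hpq : p ≤ q) [FiniteDimensional K q] :
    finrank K p + finrank K (q.map f) ≤ finrank K q + finrank K (p.map f) := by
  have : FiniteDimensional K p := Submodule.finiteDimensional_of_le hpq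
  have hq := q.finrank_map_add_finrank_inf_ker f
  have hp := p.finrank_map_add_finrank_inf_ker f
  have hker : finrank K (p ⊓ LinearMap.ker f : Submodule K V)
      ≤ finrank K (q ⊓ LinearMap.ker f : Submodule K V) :=
    Submodule.finrank_mono (inf_le_inf_right _ hpq)
  omega

/-- The Frobenius rank inequality. -/
theorem LinearMap.finrank_range_comp_add_finrank_range_comp_le (f : U →ₗ[K] V) (g : V →ₗ[K] W)
    (h : W →ₗ[K] X) [FiniteDimensional K (LinearMap.range g)] :
    finrank K (LinearMap.range (g ∘ₗ f)) + finrank K (LinearMap.range (h ∘ₗ g))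
      ≤ finrank K (LinearMap.range g) + finrank K (LinearMap.range (h ∘ₗ g ∘ₗ f)) := by
  rw [LinearMap.range_comp g h, LinearMap.range_comp (g ∘ₗ f) h]
  exact Submodule.finrank_add_finrank_map_le_of_le h (LinearMap.range_comp_le_range f g)

end RankInequalities

theorem CategoryTheory.Functor.map_homOfLE_trans_hom {R ι : Type*} [Ring R] [Preorder ι]
    (M : ι ⥤ ModuleCat R) {x y z : ι} (hxy : x ≤ y) (hyz : y ≤ z) :
    (M.map (homOfLE (hxy.trans hyz))).hom
      = (M.map (homOfLE hyz)).hom ∘ₗ (M.map (homOfLE hxy)).hom := by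
  rw [← ModuleCat.hom_comp, ← M.map_comp, homOfLE_comp]

/-- The persistence measure of a rectangle `[a,b] × [c,d]` (with
`a ≤ b ≤ c ≤ d`), `μ = r(b,c) − r(a,c) − r(b,d) + r(a,d)`, is nonnegative for a
persistence module whose structure maps all have finite rank. -/
theorem persistence_measure_nonneg (k : Type) [Field k] (M : ℝ ⥤ ModuleCat k)
    (hfin : ∀ (x y : ℝ) (h : x ≤ y),
      Module.Finite k (LinearMap.range (M.map (homOfLE h)).hom))
    (a b c d : ℝ) (hab : a ≤ b) (hbc : b ≤ c) (hcd : c ≤ d) :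
    0 ≤ (persRank k M (hbc : b ≤ c) : ℤ)
        - persRank k M (hab.trans hbc : a ≤ c)
        - persRank k M (hbc.trans hcd : b ≤ d)
        + persRank k M ((hab.trans hbc).trans hcd : a ≤ d) := by
  have := hfin b c hbc
  have frobenius := LinearMap.finrank_range_comp_add_finrank_range_comp_le
    (M.map (homOfLE hab)).hom (M.map (homOfLE hbc)).hom (M.map (homOfLE hcd)).hom
  rw [persRank, persRank, persRank, persRank, M.map_homOfLE_trans_hom hab hbc,
    M.map_homOfLE_trans_hom hbc hcd, M.map_homOfLE_trans_hom (hab.trans hbc) hcd,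
    M.map_homOfLE_trans_hom hab hbc]
  omega
end
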